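/- arXiv:1101.0759 — 2 statements merged into one kernel-verified Lean document; each statement's English description precedes it below -/
import Mathlib

section
/- Let Ω be a linear operator on a commutative ℝ-algebra Π satisfying Ω(Φ³) + 3Φ²·Ω(Φ) - 3Φ·Ω(Φ²) = 0 for all Φ ∈ Π. Then for every Φ ∈ Π: Ω(Φ⁴) + 8Φ³·Ω(Φ) - 6Φ²·Ω(Φ²) = 0. -/
/-- A linear operator satisfying the second-order identity
`Ω (Φ³) + 3 Φ² Ω Φ - 3 Φ Ω (Φ²) = 0` also satisfies
`Ω (Φ⁴) + 8 Φ³ Ω Φ - 6 Φ² Ω (Φ²) = 0`. -/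
theorem second_order_fourth_identity {A : Type*} [CommRing A] [Algebra ℝ A]
    (Ω : A →ₗ[ℝ] A)
    (hsecond : ∀ Φ : A, Ω (Φ ^ 3) + 3 * Φ ^ 2 * Ω Φ - 3 * Φ * Ω (Φ ^ 2) = 0) :
    ∀ Φ : A, Ω (Φ ^ 4) + 8 * Φ ^ 3 * Ω Φ - 6 * Φ ^ 2 * Ω (Φ ^ 2) = 0 := by
  intro Φ
  have h1 := hsecond (Φ + Φ ^ 2)
  have h2 := hsecond (Φ - Φ ^ 2)
  have h3 := hsecond (Φ ^ 2)
  have h4 := hsecond Φ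
  have e1 : (Φ + Φ ^ 2) ^ 3
      = Φ ^ 3 + (Φ ^ 4 + Φ ^ 4 + Φ ^ 4) + (Φ ^ 5 + Φ ^ 5 + Φ ^ 5) + Φ ^ 6 := by ring
  have e2 : (Φ + Φ ^ 2) ^ 2 = Φ ^ 2 + (Φ ^ 3 + Φ ^ 3) + Φ ^ 4 := by ring
  have e3 : (Φ - Φ ^ 2) ^ 3
      = Φ ^ 3 - (Φ ^ 4 + Φ ^ 4 + Φ ^ 4) + (Φ ^ 5 + Φ ^ 5 + Φ ^ 5) - Φ ^ 6 := by ring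
  have e4 : (Φ - Φ ^ 2) ^ 2 = Φ ^ 2 - (Φ ^ 3 + Φ ^ 3) + Φ ^ 4 := by ring
  have e5 : (Φ ^ 2) ^ 3 = Φ ^ 6 := by ring
  have e6 : (Φ ^ 2) ^ 2 = Φ ^ 4 := by ring
  rw [e1, e2] at h1
  rw [e3, e4] at h2
  rw [e5, e6] at h3
  simp only [map_add, map_sub] at h1 h2 h3
  have key : (6 : ℝ) • (Ω (Φ ^ 4) + 8 * Φ ^ 3 * Ω Φ - 6 * Φ ^ 2 * Ω (Φ ^ 2)) = 0 := by
    rw [Algebra.smul_def, map_ofNat]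
    linear_combination h1 - h2 - 2 * h3 + 12 * Φ * h4
  have := congrArg (fun y => (6 : ℝ)⁻¹ • y) key
  simpa [smul_smul] using this
end

section
/- Let γ, ϑ_b, ϑ_g be positive reals and θ = ϑ_b + ϑ_g, and let p = ϑ_g/θ. Define the neutral equilibrium values (as in Proposition 9.2): Φ²₂₀(λ) = p·(γ/(γ+2λ))·((γ+2λ+ϑ_g)/(γ+2λ+θ)), Φ²₁₁(λ) = p·(γ/(3γ+2λ+θ))·((γ+ϑ_g)/(γ+2λ) + (γ+ϑ_g)/(γ+θ) + (γ/(γ+2λ))·((γ+2λ+ϑ_g)/(γ+2λ+θ))), and Φ²₀₂(λ) = p·(γ/(6γ+2λ+θ))·((γ+ϑ_g)/(γ+2λ) + (γ+ϑ_g)/(γ+θ) + (4γ/(3γ+2λ+θ))·((γ+ϑ_g)/(γ+2λ) + (γ+ϑ_g)/(γ+θ) + (γ/(γ+2λ))·((γ+2λ+ϑ_g)/(γ+2λ+θ)))). Then for every λ > 0: (γ+2λ)·θ·(γ+θ)·(γ+2λ+θ)·(6γ+2λ+θ)·(Φ²₂₀(λ) − 4Φ²₁₁(λ) + 3Φ²₀₂(λ))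 = 2γ·ϑ_b·ϑ_g·λ·(2γ+2λ+θ). -/
set_option maxHeartbeats 1600000


/-- The rational-function identity (10.10):
`Φ²₂₀ − 4Φ²₁₁ + 3Φ²₀₂ = 2γϑ_bϑ_g(2γ+2λ+θ)λ / (θ(γ+θ)(γ+2λ+θ)(6γ+2λ+θ)(γ+2λ))`. -/
theorem combination_identity (γ ϑb ϑg lam : ℝ)
    (hγ : 0 < γ) (hb : 0 < ϑb) (hg : 0 < ϑg) (hlam : 0 < lam)
    (θ p : ℝ) (hθ : θ = ϑb + ϑg) (hp : p = ϑg / θ)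
    (Φ20 Φ11 Φ02 : ℝ)
    (h20 : Φ20 = p * (γ / (γ + 2 * lam)) * ((γ + 2 * lam + ϑg) / (γ + 2 * lam + θ)))
    (h11 : Φ11 = p * (γ / (3 * γ + 2 * lam + θ)) *
        ((γ + ϑg) / (γ + 2 * lam) + (γ + ϑg) / (γ + θ) +
          (γ / (γ + 2 * lam)) * ((γ + 2 * lam + ϑg) / (γ + 2 * lam + θ))))
    (h02 : Φ02 = p * (γ / (6 * γ + 2 * lam + θ)) *
        ((γ + ϑg) / (γ + 2 * lam) + (γ + ϑg) / (γ + θ) +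
          (4 * γ / (3 * γ + 2 * lam + θ)) *
            ((γ + ϑg) / (γ + 2 * lam) + (γ + ϑg) / (γ + θ) +
              (γ / (γ + 2 * lam)) * ((γ + 2 * lam + ϑg) / (γ + 2 * lam + θ))))) :
    Φ20 - 4 * Φ11 + 3 * Φ02 =
      (2 * γ * ϑb * ϑg * (2 * γ + 2 * lam + θ) * lam) /
        (θ * (γ + θ) * (γ + 2 * lam + θ) * (6 * γ + 2 * lam + θ) * (γ + 2 * lam)) := by
  have hθ0 : 0 < θ := by rw [hθ]; linarith
  have h1 : γ + 2 * lam ≠ 0 := by positivity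
  have h2 : γ + 2 * lam + θ ≠ 0 := by positivity
  have h3 : 3 * γ + 2 * lam + θ ≠ 0 := by positivity
  have h4 : 6 * γ + 2 * lam + θ ≠ 0 := by positivity
  have h5 : γ + θ ≠ 0 := by positivity
  have h6 : θ ≠ 0 := ne_of_gt hθ0
  have hbv : ϑb = θ - ϑg := by linarith
  subst h20 h11 h02 hp hbv
  field_simp
  ring
end
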